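/- arXiv:2104.10164 — 2 statements merged into one kernel-verified Lean document; each statement's English description precedes it below -/
import Mathlib

section
/- The partial sums ∑_{11 ≤ p ≤ x, p prime} 1/(p · log log p) tend to infinity as x → ∞. -/
open Filter Nat Real

lemma euler_aux (s : Finset ℕ) (hs : ∀ p ∈ s, p.Prime) :
    Summable (fun n : Nat.factoredNumbers s => (1 : ℝ) / (n : ℕ)) ∧
      ∑' n : Nat.factoredNumbers s, (1 : ℝ) / (n : ℕ) = ∏ p ∈ s, (1 - 1 / (p : ℝ))⁻¹ := by
  classical
  induction s using Finset.induction_on with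
  | empty =>
      rw [Nat.factoredNumbers_empty]
      haveI : Finite ({1} : Set ℕ) := (Set.finite_singleton 1).to_subtype
      constructor
      · exact Summable.of_finite
      · rw [Finset.prod_empty]
        have h := tsum_singleton (1 : ℕ) (fun n : ℕ => (1 : ℝ) / n)
        rw [show ∑' n : ({1} : Set ℕ), (1 : ℝ) / ((n : ℕ) : ℝ) = (1 : ℝ) / ((1 : ℕ) : ℝ) from h]
        norm_num
  | @insert p s' hps ih =>
      have hp : p.Prime := hs p (Finset.mem_insert_self p s')
      have ih' := ih (fun q hq => hs q (Finset.mem_insert_of_mem hq))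
      have hp1 : (1 : ℝ) / p < 1 := by
        rw [div_lt_one (by exact_mod_cast hp.pos)]
        exact_mod_cast hp.one_lt
      have hp0 : (0 : ℝ) ≤ 1 / p := by positivity
      have hgeo : Summable (fun k : ℕ => ((1 : ℝ) / p) ^ k) :=
        summable_geometric_of_lt_one hp0 hp1
      set e := Nat.equivProdNatFactoredNumbers hp hps
      have hcomp : (fun n : Nat.factoredNumbers (insert p s') => (1 : ℝ) / (n : ℕ)) ∘ e
          = fun x : ℕ × Nat.factoredNumbers s' => ((1 : ℝ) / p) ^ x.1 * (1 / ((x.2 : ℕ) : ℝ)) := by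
        funext x
        simp only [Function.comp_apply, e, Nat.equivProdNatFactoredNumbers_apply' hp hps]
        push_cast
        rw [one_div, one_div, one_div, mul_inv, inv_pow]
      have hsum2 : Summable (fun x : ℕ × Nat.factoredNumbers s' =>
          ((1 : ℝ) / p) ^ x.1 * (1 / ((x.2 : ℕ) : ℝ))) :=
        hgeo.mul_of_nonneg ih'.1 (fun k => by positivity) (fun m => by positivity)
      constructor
      · rw [← e.summable_iff, hcomp]; exact hsum2
      · rw [← e.tsum_eq]
        have h2 : ∑' c : ℕ × Nat.factoredNumbers s', (1 : ℝ) / ((e c : ℕ) : ℝ)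
            = ∑' c : ℕ × Nat.factoredNumbers s', ((1 : ℝ) / p) ^ c.1 * (1 / ((c.2 : ℕ) : ℝ)) :=
          tsum_congr (fun c => by simpa using congrFun hcomp c)
        rw [h2, ← Summable.tsum_mul_tsum hgeo ih'.1 hsum2,
          tsum_geometric_of_lt_one hp0 hp1, ih'.2, Finset.prod_insert hps]

lemma telescope_sum : ∀ N : ℕ, 1 ≤ N →
    ∑ n ∈ Finset.Icc 2 N, (1 : ℝ) / (n * (n - 1)) = 1 - 1 / N := by
  intro N hN
  induction N, hN using Nat.le_induction with
  | base => simp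
  | succ N hN ih =>
      rw [Finset.sum_Icc_succ_top (by omega : 2 ≤ N + 1), ih]
      have hN0 : (N : ℝ) ≠ 0 := Nat.cast_ne_zero.mpr (by omega)
      have hN1 : ((N : ℝ) + 1) ≠ 0 := by positivity
      push_cast
      field_simp
      ring_nf
      field_simp
      ring

lemma sum_primesBelow_inv_mul_le (N : ℕ) :
    ∑ p ∈ Nat.primesBelow (N + 1), (1 : ℝ) / (p * (p - 1)) ≤ 1 := by
  rcases Nat.lt_or_ge N 2 with h | h
  · -- N ≤ 1 : primesBelow (N+1) ⊆ primesBelow 2 = ∅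
    have : Nat.primesBelow (N + 1) ⊆ Nat.primesBelow 2 := by
      intro p hp
      rw [Nat.mem_primesBelow] at hp ⊢
      exact ⟨by omega, hp.2⟩
    have h2 : Nat.primesBelow 2 = ∅ := by decide
    have := Finset.subset_empty.mp (h2 ▸ this)
    simp [this]
  · calc ∑ p ∈ Nat.primesBelow (N + 1), (1 : ℝ) / (p * (p - 1))
        ≤ ∑ n ∈ Finset.Icc 2 N, (1 : ℝ) / (n * (n - 1)) := by
          refine Finset.sum_le_sum_of_subset_of_nonneg ?_ ?_
          · intro p hp
            rw [Nat.mem_primesBelow] at hp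
            exact Finset.mem_Icc.mpr ⟨hp.2.two_le, by omega⟩
          · intro n hn _
            rcases Nat.lt_or_ge n 2 with h2 | h2
            · interval_cases n <;> norm_num
            · have h2' : (2 : ℝ) ≤ n := by exact_mod_cast h2
              have : (0 : ℝ) < n * (n - 1) := by nlinarith
              positivity
      _ = 1 - 1 / N := telescope_sum N (by omega)
      _ ≤ 1 := by
          have : (0 : ℝ) ≤ 1 / N := by positivity
          linarith

lemma mertens_lower (N : ℕ) (hN : 3 ≤ N) :
    Real.log (Real.log N) ≤ (∑ p ∈ Nat.primesBelow (N + 1), (1 : ℝ) / p) + 1 := by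
  classical
  set s := Nat.primesBelow (N + 1) with hs
  have hsprime : ∀ p ∈ s, p.Prime := fun p hp => Nat.prime_of_mem_primesBelow hp
  obtain ⟨hsum, htsum⟩ := euler_aux s hsprime
  -- each 1 ≤ n ≤ N is in factoredNumbers s
  have hmem : ∀ n ∈ Finset.Icc 1 N, n ∈ Nat.factoredNumbers s := by
    intro n hn
    rw [Finset.mem_Icc] at hn
    rw [Nat.mem_factoredNumbers]
    refine ⟨by omega, fun p hp => ?_⟩
    have hpp : p.Prime := Nat.prime_of_mem_primeFactorsList hp
    have hdvd : p ∣ n := Nat.dvd_of_mem_primeFactorsList hp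
    have : p ≤ n := Nat.le_of_dvd (by omega) hdvd
    exact Nat.mem_primesBelow.mpr ⟨by omega, hpp⟩
  -- harmonic sum ≤ Euler product
  have hind : Summable (Set.indicator (Nat.factoredNumbers s) (fun n : ℕ => (1 : ℝ) / n)) := by
    rwa [← summable_subtype_iff_indicator]
  have hHP : ∑ n ∈ Finset.Icc 1 N, (1 : ℝ) / n ≤ ∏ p ∈ s, (1 - 1 / (p : ℝ))⁻¹ := by
    calc ∑ n ∈ Finset.Icc 1 N, (1 : ℝ) / n
        = ∑ n ∈ Finset.Icc 1 N,
            Set.indicator (Nat.factoredNumbers s) (fun n : ℕ => (1 : ℝ) / n) n := by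
          refine Finset.sum_congr rfl fun n hn => ?_
          rw [Set.indicator_of_mem (hmem n hn)]
      _ ≤ ∑' n : ℕ, Set.indicator (Nat.factoredNumbers s) (fun n : ℕ => (1 : ℝ) / n) n := by
          refine Summable.sum_le_tsum _ (fun n _ => ?_) hind
          exact Set.indicator_nonneg (fun m _ => by positivity) n
      _ = ∑' n : Nat.factoredNumbers s, (1 : ℝ) / (n : ℕ) := (tsum_subtype _ _).symm
      _ = ∏ p ∈ s, (1 - 1 / (p : ℝ))⁻¹ := htsum
  -- log N ≤ harmonic sum
  have hlogN : Real.log N ≤ ∑ n ∈ Finset.Icc 1 N, (1 : ℝ) / n := by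
    have h1 := log_le_harmonic_floor (N : ℝ) (by positivity)
    rw [Nat.floor_natCast] at h1
    refine h1.trans_eq ?_
    rw [harmonic_eq_sum_Icc]
    push_cast
    simp [one_div]
  have hlogNpos : 0 < Real.log N := by
    refine Real.log_pos ?_
    exact_mod_cast (by omega : 1 < N)
  -- positivity of factors
  have hfac : ∀ p ∈ s, (0 : ℝ) < (1 - 1 / (p : ℝ))⁻¹ := by
    intro p hp
    have h2 : (2 : ℝ) ≤ p := by exact_mod_cast (hsprime p hp).two_le
    have h0 : (0 : ℝ) < 1 - 1 / p := by
      rw [sub_pos, div_lt_one (by linarith)]; linarith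
    exact inv_pos.mpr h0
  -- take logs
  have h1 : Real.log (Real.log N) ≤ Real.log (∏ p ∈ s, (1 - 1 / (p : ℝ))⁻¹) :=
    Real.log_le_log hlogNpos (hlogN.trans hHP)
  have h2 : Real.log (∏ p ∈ s, (1 - 1 / (p : ℝ))⁻¹)
      = ∑ p ∈ s, Real.log (1 - 1 / (p : ℝ))⁻¹ :=
    Real.log_prod (fun p hp => (hfac p hp).ne')
  have h3 : ∀ p ∈ s, Real.log (1 - 1 / (p : ℝ))⁻¹ ≤ 1 / p + 1 / (p * (p - 1)) := by
    intro p hp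
    have h2' : (2 : ℝ) ≤ p := by exact_mod_cast (hsprime p hp).two_le
    have hlt : (1 : ℝ) / p < 1 := by rw [div_lt_one (by linarith)]; linarith
    have hpos := hfac p hp
    have := Real.log_le_sub_one_of_pos hpos
    have heq : (1 - 1 / (p : ℝ))⁻¹ - 1 = 1 / p + 1 / (p * (p - 1)) := by
      have hp0 : (p : ℝ) ≠ 0 := by linarith
      have hp1 : (p : ℝ) - 1 ≠ 0 := by intro h; nlinarith [h]
      have hd : 1 - 1 / (p : ℝ) ≠ 0 := by
        intro h; nlinarith [h]
      field_simp
      ring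
    linarith [heq ▸ this]
  calc Real.log (Real.log N) ≤ ∑ p ∈ s, Real.log (1 - 1 / (p : ℝ))⁻¹ := h2 ▸ h1
    _ ≤ ∑ p ∈ s, ((1 : ℝ) / p + 1 / (p * (p - 1))) := Finset.sum_le_sum h3
    _ = (∑ p ∈ s, (1 : ℝ) / p) + ∑ p ∈ s, (1 : ℝ) / (p * (p - 1)) := Finset.sum_add_distrib
    _ ≤ (∑ p ∈ s, (1 : ℝ) / p) + 1 := by
        have := sum_primesBelow_inv_mul_le N
        rw [← hs] at this
        linarith

noncomputable def Sfun (x : ℕ) : ℝ := ∑ p ∈ Finset.range (x + 1),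
    if p.Prime ∧ 11 ≤ p then 1 / (p * Real.log (Real.log p)) else 0

noncomputable def Afun (x : ℕ) : ℝ := ∑ p ∈ Finset.range (x + 1),
    if p.Prime ∧ 11 ≤ p then (1 : ℝ) / p else 0

lemma one_lt_log (p : ℕ) (hp : 11 ≤ p) : 1 < Real.log p := by
  rw [Real.lt_log_iff_exp_lt (by exact_mod_cast (by omega : 0 < p))]
  calc Real.exp 1 < 2.7182818286 := Real.exp_one_lt_d9
    _ ≤ 11 := by norm_num
    _ ≤ p := by exact_mod_cast hp

lemma loglog_pos (p : ℕ) (hp : 11 ≤ p) : 0 < Real.log (Real.log p) :=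
  Real.log_pos (one_lt_log p hp)

lemma term_nonneg (p : ℕ) :
    0 ≤ (if p.Prime ∧ 11 ≤ p then 1 / (p * Real.log (Real.log p)) else 0 : ℝ) := by
  split_ifs with h
  · have := loglog_pos p h.2
    have hp0 : (0 : ℝ) < p := by exact_mod_cast (by omega : 0 < p)
    positivity
  · exact le_rfl

lemma Sfun_mono : Monotone Sfun := by
  intro x y hxy
  refine Finset.sum_le_sum_of_subset_of_nonneg ?_ (fun p _ _ => term_nonneg p)
  exact Finset.range_subset_range.mpr (by omega)

lemma Afun_nonneg (x : ℕ) : 0 ≤ Afun x := by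
  refine Finset.sum_nonneg fun p _ => ?_
  split_ifs with h
  · positivity
  · exact le_rfl

lemma Afun_ge (N : ℕ) (hN : 3 ≤ N) : Real.log (Real.log N) - 3 ≤ Afun N := by
  classical
  have hm := mertens_lower N hN
  have key : ∑ p ∈ Nat.primesBelow (N + 1), (1 : ℝ) / p ≤ Afun N + 2 := by
    have hdef : Nat.primesBelow (N + 1) = (Finset.range (N + 1)).filter Nat.Prime := rfl
    rw [hdef,
      ← Finset.sum_filter_add_sum_filter_not ((Finset.range (N + 1)).filter Nat.Prime)
        (fun p => 11 ≤ p) (fun p => (1 : ℝ) / p)]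
    have h1 : ∑ p ∈ ((Finset.range (N + 1)).filter Nat.Prime).filter (fun p => 11 ≤ p),
        (1 : ℝ) / p = Afun N := by
      rw [Finset.filter_filter, Afun, Finset.sum_filter]
    have h2 : ∑ p ∈ ((Finset.range (N + 1)).filter Nat.Prime).filter (fun p => ¬ 11 ≤ p),
        (1 : ℝ) / p ≤ 2 := by
      have hsub : ((Finset.range (N + 1)).filter Nat.Prime).filter (fun p => ¬ 11 ≤ p)
          ⊆ Nat.primesBelow 11 := by
        intro p hp
        simp only [Finset.mem_filter, Finset.mem_range] at hp
        exact Nat.mem_primesBelow.mpr ⟨by omega, hp.1.2⟩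
      calc ∑ p ∈ ((Finset.range (N + 1)).filter Nat.Prime).filter (fun p => ¬ 11 ≤ p),
            (1 : ℝ) / p ≤ ∑ p ∈ Nat.primesBelow 11, (1 : ℝ) / p := by
            refine Finset.sum_le_sum_of_subset_of_nonneg hsub fun p _ _ => by positivity
        _ ≤ 2 := by
            have h11 : Nat.primesBelow 11 = {2, 3, 5, 7} := by decide
            rw [h11]
            norm_num
    linarith
  unfold Afun
  rw [Afun] at key
  linarith

lemma step_lemma (x : ℕ) (hx : 11 ≤ x) : ∃ y : ℕ, x ≤ y ∧ Sfun x + 1 / 2 ≤ Sfun y := by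
  classical
  set B : ℝ := max 1 (2 * (Afun x + 3)) with hB
  have hBpos : 0 < B := lt_of_lt_of_le one_pos (le_max_left _ _)
  set y : ℕ := max x ⌈Real.exp (Real.exp B)⌉₊ with hy
  have hxy : x ≤ y := le_max_left _ _
  refine ⟨y, hxy, ?_⟩
  have hyreal : Real.exp (Real.exp B) ≤ (y : ℝ) := by
    calc Real.exp (Real.exp B) ≤ (⌈Real.exp (Real.exp B)⌉₊ : ℝ) := Nat.le_ceil _
      _ ≤ y := by exact_mod_cast Nat.le_max_right x _
  have hlogy : Real.exp B ≤ Real.log y := by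
    have := Real.log_le_log (Real.exp_pos _) hyreal
    rwa [Real.log_exp] at this
  have hL : B ≤ Real.log (Real.log y) := by
    have := Real.log_le_log (Real.exp_pos _) hlogy
    rwa [Real.log_exp] at this
  set L : ℝ := Real.log (Real.log y) with hLdef
  have hLpos : 0 < L := lt_of_lt_of_le hBpos hL
  have hy11 : 11 ≤ y := le_trans hx hxy
  -- Sfun y - Sfun x ≥ (Afun y - Afun x) / L
  have hdiff : (Afun y - Afun x) / L ≤ Sfun y - Sfun x := by
    have hS : Sfun y = Sfun x + ∑ p ∈ Finset.Ico (x + 1) (y + 1),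
        (if p.Prime ∧ 11 ≤ p then 1 / (p * Real.log (Real.log p)) else 0 : ℝ) := by
      rw [Sfun, Sfun, Finset.range_eq_Ico, Finset.range_eq_Ico]
      exact (Finset.sum_Ico_consecutive _ (by omega : 0 ≤ x + 1) (by omega : x + 1 ≤ y + 1)).symm
    have hA : Afun y = Afun x + ∑ p ∈ Finset.Ico (x + 1) (y + 1),
        (if p.Prime ∧ 11 ≤ p then (1 : ℝ) / p else 0 : ℝ) := by
      rw [Afun, Afun, Finset.range_eq_Ico, Finset.range_eq_Ico]
      exact (Finset.sum_Ico_consecutive _ (by omega : 0 ≤ x + 1) (by omega : x + 1 ≤ y + 1)).symm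
    rw [hS, hA, add_sub_cancel_left, add_sub_cancel_left, Finset.sum_div]
    refine Finset.sum_le_sum fun p hp => ?_
    rw [Finset.mem_Ico] at hp
    split_ifs with h
    · have hp11 : 11 ≤ p := h.2
      have hpy : p ≤ y := by omega
      have hp0 : (0 : ℝ) < p := by exact_mod_cast (by omega : 0 < p)
      have hlp : 0 < Real.log p := lt_trans one_pos (one_lt_log p hp11)
      have h1 : Real.log p ≤ Real.log y :=
        Real.log_le_log hp0 (by exact_mod_cast hpy)
      have hllp : Real.log (Real.log p) ≤ L := hLdef ▸ Real.log_le_log hlp h1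
      have hll0 := loglog_pos p hp11
      rw [div_div]
      exact one_div_le_one_div_of_le (mul_pos hp0 hll0)
        (mul_le_mul_of_nonneg_left hllp hp0.le)
    · simp
  have hAy : L - 3 ≤ Afun y := by
    have := Afun_ge y (by omega)
    rw [← hLdef] at this
    exact this
  have h5 : (L - 3 - Afun x) / L ≤ (Afun y - Afun x) / L := by
    rw [div_le_div_iff_of_pos_right hLpos]
    linarith
  have h6 : 1 / 2 ≤ (L - 3 - Afun x) / L := by
    rw [le_div_iff₀ hLpos]
    have hBL : 2 * (Afun x + 3) ≤ L := le_trans (le_max_right _ _) hL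
    linarith
  linarith


lemma Sfun_unbounded : ∀ k : ℕ, ∃ x : ℕ, 11 ≤ x ∧ (k : ℝ) * (1 / 2) ≤ Sfun x := by
  intro k
  induction k with
  | zero =>
      refine ⟨11, le_rfl, ?_⟩
      simp only [Nat.cast_zero, zero_mul]
      exact Finset.sum_nonneg fun p _ => term_nonneg p
  | succ k ih =>
      obtain ⟨x, hx, hSx⟩ := ih
      obtain ⟨y, hxy, hSy⟩ := step_lemma x hx
      refine ⟨y, le_trans hx hxy, ?_⟩
      push_cast
      linarith

theorem stmt3 :
    Tendsto (fun x : ℕ => ∑ p ∈ Finset.range (x + 1),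
        if p.Prime ∧ 11 ≤ p then 1 / (p * Real.log (Real.log p)) else 0)
      atTop atTop := by
  have : (fun x : ℕ => ∑ p ∈ Finset.range (x + 1),
      if p.Prime ∧ 11 ≤ p then 1 / (p * Real.log (Real.log p)) else 0) = Sfun := rfl
  rw [this]
  refine tendsto_atTop_atTop_of_monotone Sfun_mono fun b => ?_
  obtain ⟨k, hk⟩ := exists_nat_ge (2 * b)
  obtain ⟨x, _, hSx⟩ := Sfun_unbounded k
  exact ⟨x, by linarith⟩
end

section
/- Let Ω(m) denote the number of prime divisors of m counted with multiplicity and ω(m) the number of distinct prime divisors. Then for every prime p, Ω(p) = ω(p) = 1, and (1/n)·#{m ≤ n : Ω(m) − ω(m) ≥ j} ≤ C/2^j for an absolute constant C and all j ≥ 1, n ≥ 1. -/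
open Finset ArithmeticFunction
open scoped ArithmeticFunction.Omega

/-- radical of n -/
def nrad (n : ℕ) : ℕ := ∏ p ∈ n.primeFactors, p

lemma nrad_dvd (n : ℕ) : nrad n ∣ n := Nat.prod_primeFactors_dvd n

lemma nrad_pos (n : ℕ) : 0 < nrad n := by
  apply Finset.prod_pos
  intro p hp
  exact (Nat.prime_of_mem_primeFactors hp).pos

lemma nrad_dvd_nrad {a b : ℕ} (h : a ∣ b) (hb : b ≠ 0) : nrad a ∣ nrad b :=
  Finset.prod_dvd_prod_of_subset _ _ _ (Nat.primeFactors_mono h hb)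

lemma nrad_mul_coprime {a b : ℕ} (h : Nat.Coprime a b) (ha : a ≠ 0) (hb : b ≠ 0) :
    nrad (a * b) = nrad a * nrad b := by
  unfold nrad
  rw [Nat.primeFactors_mul ha hb, Finset.prod_union (Nat.Coprime.disjoint_primeFactors h)]

lemma nrad_prime_pow {p : ℕ} (hp : p.Prime) {a : ℕ} (ha : a ≠ 0) : nrad (p ^ a) = p := by
  unfold nrad
  rw [Nat.primeFactors_prime_pow ha hp, Finset.prod_singleton]

lemma nrad_one : nrad 1 = 1 := by simp [nrad]

lemma cardFactors_nrad (m : ℕ) : Ω (nrad m) = m.primeFactors.card := by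
  rw [show m.primeFactors.card = (Nat.primeFactors m).card from rfl]
  unfold nrad
  have : ∀ s : Finset ℕ, (∀ p ∈ s, p.Prime) → Ω (∏ p ∈ s, p) = s.card := by
    intro s
    induction s using Finset.induction_on with
    | empty => simp
    | insert _ _ hx ih =>
      intro hprime
      rename_i a s'
      rw [Finset.prod_insert hx, cardFactors_mul, Finset.card_insert_of_notMem hx]
      · rw [cardFactors_apply_prime (hprime a (Finset.mem_insert_self a s')),
          ih (fun p hp => hprime p (Finset.mem_insert_of_mem hp))]
        ring
      · exact (hprime a (Finset.mem_insert_self a s')).ne_zero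
      · exact Finset.prod_ne_zero_iff.2 fun p hp => (hprime p (Finset.mem_insert_of_mem hp)).ne_zero
  exact this _ (fun p hp => Nat.prime_of_mem_primeFactors hp)

noncomputable def Fw (t : ℕ) : ℝ := (5/2 : ℝ) ^ (Ω t) / (t * nrad t)

noncomputable def Gw (t : ℕ) : ℝ := 1 / ((t : ℝ) * nrad t)

lemma Fw_nonneg (t : ℕ) : 0 ≤ Fw t := by
  unfold Fw; positivity

lemma Gw_nonneg (t : ℕ) : 0 ≤ Gw t := by
  unfold Gw; positivity

lemma Fw_one : Fw 1 = 1 := by simp [Fw, nrad_one]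

lemma Fw_mul {a b : ℕ} (h : Nat.Coprime a b) (ha : a ≠ 0) (hb : b ≠ 0) :
    Fw (a * b) = Fw a * Fw b := by
  unfold Fw
  rw [cardFactors_mul ha hb, nrad_mul_coprime h ha hb, pow_add]
  push_cast
  field_simp

lemma geomle {r : ℝ} (h0 : 0 ≤ r) (h1 : r < 1) (n : ℕ) :
    ∑ i ∈ range n, r ^ i ≤ 1 / (1 - r) := by
  have h2 : (0:ℝ) < 1 - r := by linarith
  rw [geom_sum_eq (ne_of_lt h1) n]
  have heq : (r ^ n - 1) / (r - 1) = (1 - r ^ n) / (1 - r) := by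
    rw [div_eq_div_iff (by linarith) (by linarith)]
    ring
  rw [heq, div_le_div_iff₀ h2 h2]
  nlinarith [pow_nonneg h0 n]

lemma Gw_le_Fw {t : ℕ} (k : ℕ) (hk : k ≤ Ω t) : Gw t ≤ (2/5 : ℝ) ^ k * Fw t := by
  have h1le : (1:ℝ) ≤ (2/5) ^ k * (5/2) ^ (Ω t) := by
    obtain ⟨d, hd⟩ : ∃ d, Ω t = d + k := ⟨Ω t - k, (Nat.sub_add_cancel hk).symm⟩
    have : (2/5 : ℝ) ^ k * (5/2) ^ (Ω t) = (5/2) ^ (Ω t - k) := by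
      rw [hd, Nat.add_sub_cancel, pow_add, ← mul_assoc, mul_comm ((2/5:ℝ)^k), mul_assoc,
        ← mul_pow]
      norm_num
    rw [this]
    apply one_le_pow₀
    norm_num
  unfold Gw Fw
  rw [mul_div_assoc']
  gcongr

noncomputable def sP (p : ℕ) : ℝ := 5 / ((p:ℝ) * (2*(p:ℝ) - 5))

lemma sP_nonneg {p : ℕ} (hp : 3 ≤ p) : 0 ≤ sP p := by
  unfold sP
  have h1 : (3:ℝ) ≤ (p:ℝ) := by exact_mod_cast hp
  have : (0:ℝ) < (p:ℝ) * (2*(p:ℝ) - 5) := by nlinarith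
  positivity

lemma Fw_pow_sum {p : ℕ} (hp : p.Prime) (hp2 : p ≠ 2) (n : ℕ) :
    ∑ a ∈ range (n+1), Fw (p ^ a) ≤ 1 + sP p := by
  have hp3 : 3 ≤ p := by
    have := hp.two_le
    omega
  have hpR : (3:ℝ) ≤ (p:ℝ) := by exact_mod_cast hp3
  set r : ℝ := 5 / (2*(p:ℝ)) with hr
  have hr0 : 0 ≤ r := by positivity
  have hr1 : r < 1 := by
    rw [hr, div_lt_one (by linarith)]
    linarith
  have key : ∀ i : ℕ, Fw (p ^ (i+1)) = (r / p) * r ^ i := by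
    intro i
    unfold Fw
    rw [cardFactors_apply_prime_pow hp, nrad_prime_pow hp i.succ_ne_zero]
    have hppos : (0:ℝ) < (p:ℝ) := by linarith
    rw [hr]
    push_cast
    field_simp
    have hX : (p:ℝ)^i * ((p:ℝ)⁻¹)^i = 1 := by rw [← mul_pow, mul_inv_cancel₀ hppos.ne', one_pow]
    linear_combination (-(p:ℝ) * (5/2)^i * 5) * hX
  rw [Finset.sum_range_succ']
  have h0 : Fw (p ^ 0) = 1 := by simpa using Fw_one
  rw [h0]
  have hsum : ∑ i ∈ range n, Fw (p ^ (i+1)) ≤ (r/p) * (1/(1-r)) := by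
    calc ∑ i ∈ range n, Fw (p ^ (i+1)) = ∑ i ∈ range n, (r/p) * r ^ i := by
          exact Finset.sum_congr rfl fun i _ => key i
      _ = (r/p) * ∑ i ∈ range n, r ^ i := by rw [Finset.mul_sum]
      _ ≤ (r/p) * (1/(1-r)) := by
          apply mul_le_mul_of_nonneg_left (geomle hr0 hr1 n) (by positivity)
  have hval : (r/p) * (1/(1-r)) = sP p := by
    rw [hr]
    unfold sP
    have hppos : (0:ℝ) < (p:ℝ) := by linarith
    have h2p5 : (0:ℝ) < 2*(p:ℝ) - 5 := by linarith
    field_simp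
  linarith [hsum, hval.le]

lemma euler (n : ℕ) (P : Finset ℕ) (hP : ∀ p ∈ P, p.Prime ∧ p ≠ 2) :
    ∑ t ∈ (Icc 1 n).filter (fun t => t.primeFactors ⊆ P), Fw t ≤ ∏ p ∈ P, (1 + sP p) := by
  induction P using Finset.induction_on with
  | empty =>
    have hsub : (Icc 1 n).filter (fun t => t.primeFactors ⊆ (∅ : Finset ℕ)) ⊆ {1} := by
      intro t ht
      rw [Finset.mem_filter, Finset.mem_Icc] at ht
      have : t.primeFactors = ∅ := Finset.subset_empty.1 ht.2
      rw [Nat.primeFactors_eq_empty] at this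
      simp only [Finset.mem_singleton]
      omega
    calc ∑ t ∈ (Icc 1 n).filter (fun t => t.primeFactors ⊆ (∅ : Finset ℕ)), Fw t
        ≤ ∑ t ∈ ({1} : Finset ℕ), Fw t :=
          Finset.sum_le_sum_of_subset_of_nonneg hsub (fun t _ _ => Fw_nonneg t)
      _ = 1 := by simp [Fw_one]
      _ = ∏ p ∈ (∅ : Finset ℕ), (1 + sP p) := by simp
  | insert _ _ hpnotmem ih =>
    rename_i p P
    have hp : p.Prime := (hP p (Finset.mem_insert_self p P)).1
    have hp2 : p ≠ 2 := (hP p (Finset.mem_insert_self p P)).2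
    have hP' : ∀ q ∈ P, q.Prime ∧ q ≠ 2 := fun q hq => hP q (Finset.mem_insert_of_mem hq)
    set A := (Icc 1 n).filter (fun t => t.primeFactors ⊆ insert p P) with hA
    set B := (Icc 1 n).filter (fun t => t.primeFactors ⊆ P) with hB
    set φ : ℕ → ℕ × ℕ := fun t => (t.factorization p, ordCompl[p] t) with hφ
    have hmemA : ∀ t ∈ A, 1 ≤ t ∧ t ≤ n ∧ t.primeFactors ⊆ insert p P := by
      intro t ht
      rw [hA, Finset.mem_filter, Finset.mem_Icc] at ht
      exact ⟨ht.1.1, ht.1.2, ht.2⟩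
    have hrecon : ∀ t ∈ A, p ^ (φ t).1 * (φ t).2 = t := fun t _ =>
      Nat.ordProj_mul_ordCompl_eq_self t p
    have hinj : Set.InjOn φ A := by
      intro t ht t' ht' hEq
      have := hrecon t ht
      have := hrecon t' ht'
      rw [hEq] at *
      omega
    have heq : ∀ t ∈ A, Fw (p ^ (φ t).1) * Fw (φ t).2 = Fw t := by
      intro t ht
      have ht0 : t ≠ 0 := by have := (hmemA t ht).1; omega
      have hc : Nat.Coprime (p ^ (φ t).1) (φ t).2 :=
        Nat.Coprime.pow_left _ (Nat.coprime_ordCompl hp ht0)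
      rw [← Fw_mul hc (pow_ne_zero _ hp.ne_zero) (Nat.ordCompl_pos p ht0).ne', hrecon t ht]
    have himg : A.image φ ⊆ (range (n+1)) ×ˢ B := by
      intro x hx
      rw [Finset.mem_image] at hx
      obtain ⟨t, ht, rfl⟩ := hx
      obtain ⟨ht1, htn, htP⟩ := hmemA t ht
      have ht0 : t ≠ 0 := by omega
      rw [Finset.mem_product, Finset.mem_range]
      constructor
      · show t.factorization p < n + 1
        have h1 : p ^ (t.factorization p) ∣ t := Nat.ordProj_dvd t p
        have h2 : p ^ (t.factorization p) ≤ t := Nat.le_of_dvd (by omega) h1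
        have h3 : t.factorization p < p ^ (t.factorization p) :=
          Nat.lt_pow_self hp.one_lt
        omega
      · rw [hB, Finset.mem_filter, Finset.mem_Icc]
        refine ⟨⟨Nat.ordCompl_pos p ht0, le_trans (Nat.ordCompl_le t p) htn⟩, ?_⟩
        intro q hq
        have hqp : q.Prime := Nat.prime_of_mem_primeFactors hq
        have hqdvd : q ∣ ordCompl[p] t := Nat.dvd_of_mem_primeFactors hq
        have hqt : q ∈ t.primeFactors := by
          apply Nat.primeFactors_mono (Nat.ordCompl_dvd t p) ht0
          exact hq
        have hqP : q ∈ insert p P := htP hqt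
        rcases Finset.mem_insert.1 hqP with rfl | h
        · exact absurd hqdvd (Nat.not_dvd_ordCompl hp ht0)
        · exact h
    calc ∑ t ∈ A, Fw t = ∑ t ∈ A, Fw (p ^ (φ t).1) * Fw (φ t).2 :=
          (Finset.sum_congr rfl fun t ht => (heq t ht).symm)
      _ = ∑ x ∈ A.image φ, Fw (p ^ x.1) * Fw x.2 := by
          rw [Finset.sum_image (fun t ht t' ht' h => hinj ht ht' h)]
      _ ≤ ∑ x ∈ (range (n+1)) ×ˢ B, Fw (p ^ x.1) * Fw x.2 :=
          Finset.sum_le_sum_of_subset_of_nonneg himg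
            (fun x _ _ => mul_nonneg (Fw_nonneg _) (Fw_nonneg _))
      _ = (∑ a ∈ range (n+1), Fw (p ^ a)) * (∑ t ∈ B, Fw t) := by
          rw [Finset.sum_product]
          simp_rw [← Finset.mul_sum]
          rw [← Finset.sum_mul]
      _ ≤ (1 + sP p) * ∏ q ∈ P, (1 + sP q) := by
          apply mul_le_mul (Fw_pow_sum hp hp2 n) (ih hP')
            (Finset.sum_nonneg fun t _ => Fw_nonneg t)
            (by have := sP_nonneg (p := p) (by have := hp.two_le; omega); linarith)
      _ = ∏ q ∈ insert p P, (1 + sP q) := by rw [Finset.prod_insert hpnotmem]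

lemma tele (n : ℕ) (hn : 2 ≤ n) :
    ∑ k ∈ Icc 3 n, ((1:ℝ)/((k:ℝ)-1) - 1/k) = 1/2 - 1/n := by
  induction n, hn using Nat.le_induction with
  | base => simp
  | succ n hn ih =>
    rw [Finset.sum_Icc_succ_top (by omega), ih]
    have h1 : ((n:ℝ)) ≥ 2 := by exact_mod_cast hn
    have hn0 : (n:ℝ) ≠ 0 := by linarith
    push_cast
    rw [add_sub_cancel_right]
    ring

lemma sP_sum (n : ℕ) :
    ∑ p ∈ (range (n+1)).filter (fun p => p.Prime ∧ p ≠ 2), sP p ≤ 5 := by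
  have hsub : (range (n+1)).filter (fun p => p.Prime ∧ p ≠ 2) ⊆ Icc 3 n := by
    intro p hp
    rw [Finset.mem_filter, Finset.mem_range] at hp
    rw [Finset.mem_Icc]
    have := hp.2.1.two_le
    have := hp.2.2
    omega
  have h1 : ∑ p ∈ (range (n+1)).filter (fun p => p.Prime ∧ p ≠ 2), sP p
      ≤ ∑ k ∈ Icc 3 n, sP k := by
    apply Finset.sum_le_sum_of_subset_of_nonneg hsub
    intro k hk _
    rw [Finset.mem_Icc] at hk
    exact sP_nonneg hk.1
  have h2 : ∑ k ∈ Icc 3 n, sP k ≤ ∑ k ∈ Icc 3 n, 10 * ((1:ℝ)/((k:ℝ)-1) - 1/k) := by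
    apply Finset.sum_le_sum
    intro k hk
    rw [Finset.mem_Icc] at hk
    have hk3 : (3:ℝ) ≤ (k:ℝ) := by exact_mod_cast hk.1
    unfold sP
    have hd1 : (0:ℝ) < (k:ℝ) * (2*(k:ℝ) - 5) := by nlinarith
    have hd2 : (0:ℝ) < (k:ℝ) - 1 := by linarith
    have hd3 : (0:ℝ) < (k:ℝ) := by linarith
    have : (1:ℝ)/((k:ℝ)-1) - 1/k = 1/(((k:ℝ)-1)*k) := by
      field_simp
      ring
    rw [this, mul_one_div]
    rw [div_le_div_iff₀ hd1 (by nlinarith)]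
    nlinarith
  rcases le_or_gt 3 n with h3 | h3
  · have h4 : ∑ k ∈ Icc 3 n, 10 * ((1:ℝ)/((k:ℝ)-1) - 1/k) = 10 * (1/2 - 1/n) := by
      rw [← Finset.mul_sum, tele n (by omega)]
    have h5 : (0:ℝ) < (n:ℝ) := by positivity
    have h6 : (0:ℝ) ≤ 1/(n:ℝ) := by positivity
    calc _ ≤ ∑ k ∈ Icc 3 n, 10 * ((1:ℝ)/((k:ℝ)-1) - 1/k) := le_trans h1 h2
      _ = 10 * (1/2 - 1/n) := h4
      _ ≤ 5 := by linarith
  · have : Icc 3 n = ∅ := by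
      apply Finset.Icc_eq_empty
      omega
    rw [this] at h1 h2
    simp at h1
    linarith [h1]

lemma oddsum (n : ℕ) :
    ∑ t ∈ (Icc 1 n).filter (fun t => ¬ 2 ∣ t), Fw t ≤ Real.exp 5 := by
  set P := (range (n+1)).filter (fun p => p.Prime ∧ p ≠ 2) with hP
  have hsub : (Icc 1 n).filter (fun t => ¬ 2 ∣ t) ⊆
      (Icc 1 n).filter (fun t => t.primeFactors ⊆ P) := by
    intro t ht
    rw [Finset.mem_filter, Finset.mem_Icc] at ht
    rw [Finset.mem_filter, Finset.mem_Icc]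
    refine ⟨ht.1, ?_⟩
    intro q hq
    have hqp : q.Prime := Nat.prime_of_mem_primeFactors hq
    have hqdvd : q ∣ t := Nat.dvd_of_mem_primeFactors hq
    have hqle : q ≤ t := Nat.le_of_dvd (by omega) hqdvd
    rw [hP, Finset.mem_filter, Finset.mem_range]
    refine ⟨by omega, hqp, ?_⟩
    rintro rfl
    exact ht.2 hqdvd
  have hPprime : ∀ p ∈ P, p.Prime ∧ p ≠ 2 := by
    intro p hp
    rw [hP, Finset.mem_filter] at hp
    exact hp.2
  calc ∑ t ∈ (Icc 1 n).filter (fun t => ¬ 2 ∣ t), Fw t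
      ≤ ∑ t ∈ (Icc 1 n).filter (fun t => t.primeFactors ⊆ P), Fw t :=
        Finset.sum_le_sum_of_subset_of_nonneg hsub (fun t _ _ => Fw_nonneg t)
    _ ≤ ∏ p ∈ P, (1 + sP p) := euler n P hPprime
    _ ≤ ∏ p ∈ P, Real.exp (sP p) := by
        apply Finset.prod_le_prod
        · intro p hp
          have hp3 : 3 ≤ p := by
            have h2 := (hPprime p hp).1.two_le
            have h3 := (hPprime p hp).2
            omega
          have := sP_nonneg hp3
          linarith
        · intro p hp
          linarith [Real.add_one_le_exp (sP p)]
    _ = Real.exp (∑ p ∈ P, sP p) := (Real.exp_sum P sP).symm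
    _ ≤ Real.exp 5 := Real.exp_le_exp.2 (sP_sum n)

lemma Tlemma (n k : ℕ) :
    ∑ t ∈ (Icc 1 n).filter (fun t => ¬ 2 ∣ t ∧ k ≤ Ω t), Gw t
      ≤ (2/5:ℝ) ^ k * Real.exp 5 := by
  calc ∑ t ∈ (Icc 1 n).filter (fun t => ¬ 2 ∣ t ∧ k ≤ Ω t), Gw t
      ≤ ∑ t ∈ (Icc 1 n).filter (fun t => ¬ 2 ∣ t ∧ k ≤ Ω t), (2/5:ℝ) ^ k * Fw t := by
        apply Finset.sum_le_sum
        intro t ht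
        rw [Finset.mem_filter] at ht
        exact Gw_le_Fw k ht.2.2
    _ = (2/5:ℝ) ^ k * ∑ t ∈ (Icc 1 n).filter (fun t => ¬ 2 ∣ t ∧ k ≤ Ω t), Fw t := by
        rw [Finset.mul_sum]
    _ ≤ (2/5:ℝ) ^ k * ∑ t ∈ (Icc 1 n).filter (fun t => ¬ 2 ∣ t), Fw t := by
        apply mul_le_mul_of_nonneg_left _ (by positivity)
        apply Finset.sum_le_sum_of_subset_of_nonneg _ (fun t _ _ => Fw_nonneg t)
        intro t ht
        rw [Finset.mem_filter] at ht ⊢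
        exact ⟨ht.1, ht.2.1⟩
    _ ≤ (2/5:ℝ) ^ k * Real.exp 5 :=
        mul_le_mul_of_nonneg_left (oddsum n) (by positivity)

lemma pw (j b : ℕ) : (1/2:ℝ)^b * (2/5:ℝ)^(j-b) ≤ (1/2:ℝ)^j * (4/5:ℝ)^((j-b)+(b-j)) := by
  rcases le_or_gt b j with h | h
  · have hb : b - j = 0 := by omega
    have hj : j = b + (j - b) := by omega
    rw [hb, Nat.add_zero]
    nth_rewrite 2 [hj]
    rw [pow_add, mul_assoc, ← mul_pow]
    norm_num
  · have hj : j - b = 0 := by omega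
    have hb : b = j + (b - j) := by omega
    rw [hj, Nat.zero_add, pow_zero, mul_one]
    nth_rewrite 1 [hb]
    rw [pow_add]
    apply mul_le_mul_of_nonneg_left _ (by positivity)
    apply pow_le_pow_left₀ (by norm_num) (by norm_num)

lemma sum_pw (N j : ℕ) : ∑ b ∈ range N, ((4/5:ℝ))^((j-b)+(b-j)) ≤ 10 := by
  rw [← Finset.sum_filter_add_sum_filter_not (range N) (fun b => b ≤ j)]
  have h1 : ∑ b ∈ (range N).filter (fun b => b ≤ j), ((4/5:ℝ))^((j-b)+(b-j)) ≤ 5 := by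
    have he : ∀ b ∈ (range N).filter (fun b => b ≤ j),
        ((4/5:ℝ))^((j-b)+(b-j)) = (fun i => ((4/5:ℝ))^i) ((j : ℕ) - b) := by
      intro b hb
      rw [Finset.mem_filter] at hb
      have : b - j = 0 := by omega
      rw [this, Nat.add_zero]
    rw [Finset.sum_congr rfl he]
    rw [← Finset.sum_image (f := fun i => ((4/5:ℝ))^i)
      (g := fun b => j - b) ?hinj]
    case hinj =>
      intro x hx y hy hxy
      simp only [Finset.coe_filter, Set.mem_setOf_eq, Finset.mem_coe, Finset.mem_filter] at hx hy
      have h' : j - x = j - y := hxy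
      omega
    calc _ ≤ ∑ i ∈ range (j+1), ((4/5:ℝ))^i := by
          apply Finset.sum_le_sum_of_subset_of_nonneg _ (fun i _ _ => by positivity)
          intro i hi
          rw [Finset.mem_image] at hi
          obtain ⟨b, hb, rfl⟩ := hi
          rw [Finset.mem_range]
          omega
      _ ≤ 1 / (1 - 4/5) := geomle (by norm_num) (by norm_num) _
      _ = 5 := by norm_num
  have h2 : ∑ b ∈ (range N).filter (fun b => ¬ b ≤ j), ((4/5:ℝ))^((j-b)+(b-j)) ≤ 5 := by
    have he : ∀ b ∈ (range N).filter (fun b => ¬ b ≤ j),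
        ((4/5:ℝ))^((j-b)+(b-j)) = (fun i => ((4/5:ℝ))^i) (b - j) := by
      intro b hb
      rw [Finset.mem_filter] at hb
      have : j - b = 0 := by omega
      rw [this, Nat.zero_add]
    rw [Finset.sum_congr rfl he]
    rw [← Finset.sum_image (f := fun i => ((4/5:ℝ))^i)
      (g := fun b => b - j) ?hinj]
    case hinj =>
      intro x hx y hy hxy
      simp only [Finset.coe_filter, Set.mem_setOf_eq, Finset.mem_coe, Finset.mem_filter] at hx hy
      have h' : x - j = y - j := hxy
      omega
    calc _ ≤ ∑ i ∈ range N, ((4/5:ℝ))^i := by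
          apply Finset.sum_le_sum_of_subset_of_nonneg _ (fun i _ _ => by positivity)
          intro i hi
          rw [Finset.mem_image] at hi
          obtain ⟨b, hb, rfl⟩ := hi
          rw [Finset.mem_filter, Finset.mem_range] at hb
          rw [Finset.mem_range]
          omega
      _ ≤ 1 / (1 - 4/5) := geomle (by norm_num) (by norm_num) _
      _ = 5 := by norm_num
  linarith

lemma DS (n j : ℕ) :
    ∑ d ∈ (Icc 1 n).filter (fun d => j ≤ Ω d), Gw d ≤ 10 * Real.exp 5 * (1/2:ℝ)^j := by
  set D := (Icc 1 n).filter (fun d => j ≤ Ω d) with hD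
  set ψ : ℕ → ℕ × ℕ := fun d => (d.factorization 2, ordCompl[2] d) with hψ
  set g : ℕ × ℕ → ℝ := fun x => (1/2:ℝ)^x.1 * Gw x.2 with hg
  have hmemD : ∀ d ∈ D, 1 ≤ d ∧ d ≤ n ∧ j ≤ Ω d := by
    intro d hd
    rw [hD, Finset.mem_filter, Finset.mem_Icc] at hd
    exact ⟨hd.1.1, hd.1.2, hd.2⟩
  have hrecon : ∀ d : ℕ, 2 ^ (ψ d).1 * (ψ d).2 = d := fun d =>
    Nat.ordProj_mul_ordCompl_eq_self d 2
  have hinj : Set.InjOn ψ D := by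
    intro d hd d' hd' hEq
    have h1 := hrecon d
    have h2 := hrecon d'
    rw [hEq] at h1
    omega
  have hpoint : ∀ d ∈ D, Gw d ≤ g (ψ d) := by
    intro d hd
    obtain ⟨hd1, hdn, hdj⟩ := hmemD d hd
    have hd0 : d ≠ 0 := by omega
    set b := (ψ d).1
    set t := (ψ d).2
    have ht0 : 0 < t := Nat.ordCompl_pos 2 hd0
    have htd : t ∣ d := Nat.ordCompl_dvd d 2
    have hradle : nrad t ≤ nrad d :=
      Nat.le_of_dvd (nrad_pos d) (nrad_dvd_nrad htd hd0)
    have hdeq : 2 ^ b * t = d := hrecon d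
    have h1 : ((2:ℝ))^b * t * nrad t ≤ (d : ℝ) * nrad d := by
      have : ((2:ℝ))^b * t = (d:ℝ) := by exact_mod_cast congrArg (Nat.cast : ℕ → ℝ) hdeq
      rw [this]
      apply mul_le_mul_of_nonneg_left (by exact_mod_cast hradle) (by positivity)
    have hpos : (0:ℝ) < ((2:ℝ))^b * t * nrad t := by
      have := nrad_pos t
      positivity
    show Gw d ≤ (1/2:ℝ)^b * Gw t
    unfold Gw
    rw [div_pow, one_pow, div_mul_div_comm, one_mul]
    apply (one_div_le_one_div_of_le hpos ?_).trans_eq ?_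
    · exact h1
    · rw [mul_assoc]
  set U := ((range (n+1)) ×ˢ (Icc 1 n)).filter
    (fun x : ℕ × ℕ => ¬ 2 ∣ x.2 ∧ j - x.1 ≤ Ω x.2) with hU
  have himg : D.image ψ ⊆ U := by
    intro x hx
    rw [Finset.mem_image] at hx
    obtain ⟨d, hd, rfl⟩ := hx
    obtain ⟨hd1, hdn, hdj⟩ := hmemD d hd
    have hd0 : d ≠ 0 := by omega
    rw [hU, Finset.mem_filter, Finset.mem_product, Finset.mem_range, Finset.mem_Icc]
    have hble : (ψ d).1 ≤ n := by
      have h1 : 2 ^ (d.factorization 2) ∣ d := Nat.ordProj_dvd d 2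
      have h2 : 2 ^ (d.factorization 2) ≤ d := Nat.le_of_dvd (by omega) h1
      have h3 : d.factorization 2 < 2 ^ (d.factorization 2) :=
        Nat.lt_pow_self (by norm_num)
      show d.factorization 2 ≤ n
      omega
    have ht0 : 0 < (ψ d).2 := Nat.ordCompl_pos 2 hd0
    have htle : (ψ d).2 ≤ n := le_trans (Nat.ordCompl_le d 2) hdn
    have hodd : ¬ 2 ∣ (ψ d).2 := Nat.not_dvd_ordCompl Nat.prime_two hd0
    have hOm : Ω d = (ψ d).1 + Ω (ψ d).2 := by
      conv_lhs => rw [← hrecon d]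
      rw [cardFactors_mul (pow_ne_zero _ two_ne_zero) ht0.ne',
        cardFactors_apply_prime_pow Nat.prime_two]
    refine ⟨⟨by omega, ht0, htle⟩, hodd, by omega⟩
  have step1 : ∑ d ∈ D, Gw d ≤ ∑ x ∈ U, g x := by
    calc ∑ d ∈ D, Gw d ≤ ∑ d ∈ D, g (ψ d) := Finset.sum_le_sum hpoint
      _ = ∑ x ∈ D.image ψ, g x := by
          rw [Finset.sum_image (fun x hx y hy h => hinj hx hy h)]
      _ ≤ ∑ x ∈ U, g x :=
          Finset.sum_le_sum_of_subset_of_nonneg himg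
            (fun x _ _ => mul_nonneg (by positivity) (Gw_nonneg _))
  have step2 : ∑ x ∈ U, g x =
      ∑ b ∈ range (n+1), (1/2:ℝ)^b *
        ∑ t ∈ (Icc 1 n).filter (fun t => ¬ 2 ∣ t ∧ j - b ≤ Ω t), Gw t := by
    rw [hU, Finset.sum_filter, Finset.sum_product]
    apply Finset.sum_congr rfl
    intro b _
    rw [Finset.mul_sum, Finset.sum_filter]
  have step3 : ∑ d ∈ D, Gw d ≤
      ∑ b ∈ range (n+1), (1/2:ℝ)^b * ((2/5:ℝ)^(j-b) * Real.exp 5) := by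
    rw [step2] at step1
    refine le_trans step1 (Finset.sum_le_sum ?_)
    intro b _
    exact mul_le_mul_of_nonneg_left (Tlemma n (j-b)) (by positivity)
  calc ∑ d ∈ D, Gw d ≤ ∑ b ∈ range (n+1), (1/2:ℝ)^b * ((2/5:ℝ)^(j-b) * Real.exp 5) := step3
    _ = ∑ b ∈ range (n+1), ((1/2:ℝ)^b * (2/5:ℝ)^(j-b)) * Real.exp 5 := by
        apply Finset.sum_congr rfl; intro b _; ring
    _ ≤ ∑ b ∈ range (n+1), ((1/2:ℝ)^j * (4/5:ℝ)^((j-b)+(b-j))) * Real.exp 5 := by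
        apply Finset.sum_le_sum
        intro b _
        exact mul_le_mul_of_nonneg_right (pw j b) (Real.exp_nonneg 5)
    _ = ((1/2:ℝ)^j * Real.exp 5) * ∑ b ∈ range (n+1), (4/5:ℝ)^((j-b)+(b-j)) := by
        rw [Finset.mul_sum]
        apply Finset.sum_congr rfl; intro b _; ring
    _ ≤ ((1/2:ℝ)^j * Real.exp 5) * 10 := by
        apply mul_le_mul_of_nonneg_left (sum_pw (n+1) j) (by positivity)
    _ = 10 * Real.exp 5 * (1/2:ℝ)^j := by ring

theorem stmt19 :
    (∀ p : ℕ, p.Prime →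
      p.primeFactorsList.length = 1 ∧ p.primeFactors.card = 1) ∧
    ∃ C : ℝ, ∀ j : ℕ, 1 ≤ j → ∀ n : ℕ, 1 ≤ n →
      (((Finset.Icc 1 n).filter
          (fun m => j ≤ m.primeFactorsList.length - m.primeFactors.card)).card : ℝ) / n ≤
        C / 2 ^ j := by
  constructor
  · intro p hp
    constructor
    · rw [Nat.primeFactorsList_prime hp]
      rfl
    · rw [hp.primeFactors]
      rfl
  · refine ⟨10 * Real.exp 5, fun j hj n hn => ?_⟩
    set N := (Finset.Icc 1 n).filter
      (fun m => j ≤ m.primeFactorsList.length - m.primeFactors.card) with hN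
    set Dset := (Icc 1 n).filter (fun d => j ≤ Ω d) with hDset
    have hsub : N ⊆ Dset.biUnion
        (fun d => (Icc 1 n).filter (fun m => d * nrad d ∣ m)) := by
      intro m hm
      rw [hN, Finset.mem_filter, Finset.mem_Icc] at hm
      obtain ⟨⟨hm1, hmn⟩, hmj⟩ := hm
      have hm0 : m ≠ 0 := by omega
      have hrdvd : nrad m ∣ m := nrad_dvd m
      obtain ⟨d, hmd⟩ := hrdvd
      have hd0 : d ≠ 0 := by
        intro h
        rw [h, Nat.mul_zero] at hmd
        omega
      have hddvd : d ∣ m := Dvd.intro_left _ hmd.symm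
      have hOm : Ω m = m.primeFactors.card + Ω d := by
        conv_lhs => rw [hmd]
        rw [cardFactors_mul (nrad_pos m).ne' hd0, cardFactors_nrad m]
      have hlen : m.primeFactorsList.length = m.primeFactors.card + Ω d := by
        rw [← cardFactors_apply]
        exact hOm
      have hjd : j ≤ Ω d := by omega
      rw [Finset.mem_biUnion]
      refine ⟨d, ?_, ?_⟩
      · rw [hDset, Finset.mem_filter, Finset.mem_Icc]
        exact ⟨⟨by omega, le_trans (Nat.le_of_dvd (by omega) hddvd) hmn⟩, hjd⟩
      · rw [Finset.mem_filter, Finset.mem_Icc]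
        refine ⟨⟨hm1, hmn⟩, ?_⟩
        have h1 : nrad d ∣ nrad m := nrad_dvd_nrad hddvd hm0
        have h2 : d * nrad d ∣ d * nrad m := mul_dvd_mul_left d h1
        have h3 : d * nrad m = m := by rw [mul_comm]; exact hmd.symm
        exact h3 ▸ h2
    have hcard : (N.card : ℝ) ≤ ∑ d ∈ Dset, ((n / (d * nrad d) : ℕ) : ℝ) := by
      have h1 : N.card ≤ ∑ d ∈ Dset, ((Icc 1 n).filter (fun m => d * nrad d ∣ m)).card :=
        le_trans (Finset.card_le_card hsub) (Finset.card_biUnion_le)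
      have h2 : ∀ d : ℕ, ((Icc 1 n).filter (fun m => d * nrad d ∣ m)).card
          = n / (d * nrad d) := by
        intro d
        rw [show (Icc 1 n) = Ioc 0 n from by rw [← Finset.Icc_add_one_left_eq_Ioc, Nat.zero_add]]
        exact Nat.Ioc_filter_dvd_card_eq_div n (d * nrad d)
      calc (N.card : ℝ) ≤ ((∑ d ∈ Dset, ((Icc 1 n).filter (fun m => d * nrad d ∣ m)).card : ℕ) : ℝ) := by
            exact_mod_cast h1
        _ = ∑ d ∈ Dset, ((n / (d * nrad d) : ℕ) : ℝ) := by
            push_cast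
            exact Finset.sum_congr rfl fun d _ => by rw [h2 d]
    have hGw : ∑ d ∈ Dset, ((n / (d * nrad d) : ℕ) : ℝ) ≤ (n : ℝ) * ∑ d ∈ Dset, Gw d := by
      rw [Finset.mul_sum]
      apply Finset.sum_le_sum
      intro d hd
      rw [hDset, Finset.mem_filter, Finset.mem_Icc] at hd
      have hd1 : 1 ≤ d := hd.1.1
      have hpos : (0:ℝ) < (d : ℝ) * nrad d := by
        have h1 : 0 < d := hd1
        have h2 := nrad_pos d
        positivity
      calc ((n / (d * nrad d) : ℕ) : ℝ) ≤ (n : ℝ) / ((d * nrad d : ℕ) : ℝ) :=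
            Nat.cast_div_le
        _ = (n : ℝ) * Gw d := by
            unfold Gw
            push_cast
            ring
    have hsumG : ∑ d ∈ Dset, Gw d ≤ 10 * Real.exp 5 * (1/2:ℝ)^j := DS n j
    have hnpos : (0:ℝ) < (n : ℝ) := by
      have : 0 < n := hn
      exact_mod_cast this
    rw [div_le_div_iff₀ hnpos (by positivity)]
    calc (N.card : ℝ) * 2 ^ j ≤ ((n : ℝ) * (10 * Real.exp 5 * (1/2:ℝ)^j)) * 2 ^ j := by
          apply mul_le_mul_of_nonneg_right _ (by positivity)
          calc (N.card : ℝ) ≤ ∑ d ∈ Dset, ((n / (d * nrad d) : ℕ) : ℝ) := hcard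
            _ ≤ (n : ℝ) * ∑ d ∈ Dset, Gw d := hGw
            _ ≤ (n : ℝ) * (10 * Real.exp 5 * (1/2:ℝ)^j) :=
                mul_le_mul_of_nonneg_left hsumG (by positivity)
      _ = 10 * Real.exp 5 * ((1/2:ℝ)^j * 2^j) * (n:ℝ) := by ring
      _ = 10 * Real.exp 5 * (n:ℝ) := by
          rw [← mul_pow]
          norm_num
end
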